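/- For all n ≥ 15, with a = (1 + √10)/6, Tₙ = {x ∈ ℝⁿ : x₁ > 1/2, ‖x − a·e₁‖ < 1/2, ‖x‖ < 1} and Sₙ = Tₙ ∪ (−Tₙ), one has vol(Sₙ)/vol(Bₙ) > (1/2)ⁿ. -/

import Mathlib

/-
Put `e = e₁`, `c = a • e` and `t = a - 1/2`. The ball `B(c, 1/2)` is the union of the slab
`|⟪x - c, e⟫| < t` and two caps. Since `3a² - a = 3/4`, the slab lies in `Tₙ`, and each cap, shifted
by `∓ t • e`, lies in one half of the ball of radius `ρ = √(1/4 - t²) ≈ 0.461` centred at `0`.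
Hence `vol Tₙ ≥ (2⁻ⁿ - ρⁿ) vol Bₙ`, and as `Sₙ` is the disjoint union of `Tₙ` and `-Tₙ`,
`vol Sₙ ≥ 2 (2⁻ⁿ - ρⁿ) vol Bₙ > 2⁻ⁿ vol Bₙ` because `(2ρ)ⁿ ≤ (2ρ)¹⁴ < 1/2`.
-/

open MeasureTheory Metric

noncomputable def a : ℝ := (1 + Real.sqrt 10) / 6

noncomputable def T (n : ℕ) (hn : 0 < n) : Set (EuclideanSpace ℝ (Fin n)) :=
  {x | x ⟨0, hn⟩ > 1/2 ∧ ‖x - a • EuclideanSpace.single (⟨0, hn⟩ : Fin n) (1 : ℝ)‖ < 1/2 ∧ ‖x‖ < 1}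

open RealInnerProductSpace

section Caps

variable {E : Type*} [NormedAddCommGroup E] [InnerProductSpace ℝ E]

theorem cap_subset_preimage_halfBall {c e : E} (he : ‖e‖ = 1) {r t : ℝ} (ht : 0 ≤ t) :
    ball c r ∩ {x | t ≤ ⟪x - c, e⟫} ⊆
      (-(c + t • e) + ·) ⁻¹' (ball 0 √(r ^ 2 - t ^ 2) ∩ {y | 0 ≤ ⟪y, e⟫}) := by
  rintro x ⟨hx, hxt : t ≤ ⟪x - c, e⟫⟩
  have hshift : -(c + t • e) + x = (x - c) - t • e := by abel
  have hnorm : ‖x - c‖ ^ 2 < r ^ 2 := by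
    rw [mem_ball_iff_norm] at hx
    exact pow_lt_pow_left₀ hx (norm_nonneg _) two_ne_zero
  simp only [Set.mem_preimage, Set.mem_inter_iff, mem_ball_zero_iff, Set.mem_ofPred_eq, hshift]
  constructor
  · rw [Real.lt_sqrt (norm_nonneg _), norm_sub_sq_real, real_inner_smul_right, norm_smul, he,
      Real.norm_eq_abs, mul_one, sq_abs]
    nlinarith [mul_le_mul_of_nonneg_left hxt ht]
  · rw [inner_sub_left, real_inner_smul_left, real_inner_self_eq_norm_sq, he]
    linarith

variable [MeasurableSpace E] [BorelSpace E] (μ : Measure E) [μ.IsAddHaarMeasure]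

theorem measure_cap_le_measure_halfBall {c e : E} (he : ‖e‖ = 1) {r t : ℝ} (ht : 0 ≤ t) :
    μ (ball c r ∩ {x | t ≤ ⟪x - c, e⟫}) ≤ μ (ball 0 √(r ^ 2 - t ^ 2) ∩ {y | 0 ≤ ⟪y, e⟫}) :=
  (measure_mono (cap_subset_preimage_halfBall he ht)).trans_eq (measure_preimage_add _ _ _)

variable [FiniteDimensional ℝ E]

theorem measure_inner_eq_zero {e : E} (he : e ≠ 0) : μ {y | ⟪y, e⟫ = 0} = 0 := by
  have hne : (ℝ ∙ e)ᗮ ≠ ⊤ := fun h ↦ he <| inner_self_eq_zero.1 <|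
    Submodule.mem_orthogonal_singleton_iff_inner_left.1 (Submodule.eq_top_iff'.1 h e)
  convert Measure.addHaar_submodule μ _ hne using 2
  ext y
  exact Submodule.mem_orthogonal_singleton_iff_inner_left.symm

theorem measure_inter_halfSpace_add_inter_halfSpace_neg {s : Set E} (hs : MeasurableSet s)
    {e : E} (he : e ≠ 0) :
    μ (s ∩ {y | 0 ≤ ⟪y, e⟫}) + μ (s ∩ {y | 0 ≤ ⟪y, -e⟫}) = μ s := by
  set Hp := s ∩ {y | 0 ≤ ⟪y, e⟫}
  set Hm := s ∩ {y | 0 ≤ ⟪y, -e⟫}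
  have hmeas : MeasurableSet Hm := hs.inter (measurableSet_le measurable_const (by fun_prop))
  have hunion : Hp ∪ Hm = s := by
    ext y
    simp only [Hp, Hm, Set.mem_union, Set.mem_inter_iff, Set.mem_ofPred_eq, inner_neg_right,
      ← and_or_left, and_iff_left_iff_imp]
    exact fun _ ↦ (le_total 0 ⟪y, e⟫).imp id neg_nonneg.2
  have hnull : μ (Hp ∩ Hm) = 0 := by
    refine measure_mono_null (fun y ⟨⟨_, h₁⟩, _, h₂⟩ ↦ ?_) (measure_inner_eq_zero μ he)
    simp only [Set.mem_ofPred_eq, inner_neg_right] at h₁ h₂ ⊢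
    linarith
  rw [← measure_union_add_inter Hp hmeas, hunion, hnull, add_zero]

theorem measure_ball_le_measure_slab_add_measure_ball {e : E} (he : ‖e‖ = 1) (c : E) (r : ℝ)
    {t : ℝ} (ht : 0 ≤ t) :
    μ (ball c r) ≤ μ (ball c r ∩ {x | |⟪x - c, e⟫| < t}) + μ (ball (0 : E) √(r ^ 2 - t ^ 2)) := by
  have he' : ‖-e‖ = 1 := by rwa [norm_neg]
  have hcover : ball c r ⊆ (ball c r ∩ {x | |⟪x - c, e⟫| < t}) ∪
      (ball c r ∩ {x | t ≤ ⟪x - c, e⟫}) ∪ (ball c r ∩ {x | t ≤ ⟪x - c, -e⟫}) := by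
    intro x hx
    rcases lt_or_ge |⟪x - c, e⟫| t with hslab | hcap
    · exact Or.inl (Or.inl ⟨hx, hslab⟩)
    rcases le_abs.1 hcap with hpos | hneg
    · exact Or.inl (Or.inr ⟨hx, hpos⟩)
    · exact Or.inr ⟨hx, by rwa [Set.mem_ofPred_eq, inner_neg_right]⟩
  calc μ (ball c r)
      ≤ μ (ball c r ∩ {x | |⟪x - c, e⟫| < t}) + μ (ball c r ∩ {x | t ≤ ⟪x - c, e⟫}) +
          μ (ball c r ∩ {x | t ≤ ⟪x - c, -e⟫}) :=
        (measure_mono hcover).trans <|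
          (measure_union_le _ _).trans (add_le_add_left (measure_union_le _ _) _)
    _ ≤ μ (ball c r ∩ {x | |⟪x - c, e⟫| < t}) +
          μ (ball 0 √(r ^ 2 - t ^ 2) ∩ {y | 0 ≤ ⟪y, e⟫}) +
          μ (ball 0 √(r ^ 2 - t ^ 2) ∩ {y | 0 ≤ ⟪y, -e⟫}) :=
        add_le_add (add_le_add le_rfl (measure_cap_le_measure_halfBall μ he ht))
          (measure_cap_le_measure_halfBall μ he' ht)
    _ = μ (ball c r ∩ {x | |⟪x - c, e⟫| < t}) + μ (ball (0 : E) √(r ^ 2 - t ^ 2)) := by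
        rw [add_assoc, measure_inter_halfSpace_add_inter_halfSpace_neg μ measurableSet_ball
          (norm_ne_zero_iff.1 (he.trans_ne one_ne_zero))]

end Caps

theorem three_mul_a_sq_sub_a : 3 * a ^ 2 - a = 3 / 4 := by
  have h := Real.sq_sqrt (show (0 : ℝ) ≤ 10 by norm_num)
  unfold a
  nlinarith

theorem a_mem_Ioo : a ∈ Set.Ioo (1 / 2) (0.69375) := by
  have h := Real.sq_sqrt (show (0 : ℝ) ≤ 10 by norm_num)
  have h₀ := Real.sqrt_nonneg 10
  constructor <;> unfold a <;> nlinarith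

section Slab

variable {E : Type*} [NormedAddCommGroup E] [InnerProductSpace ℝ E]

theorem half_lt_inner_and_norm_lt_one {e x : E} (he : ‖e‖ = 1) (hx : ‖x - a • e‖ < 1 / 2)
    (hslab : |⟪x - a • e, e⟫| < a - 1 / 2) : 1 / 2 < ⟪x, e⟫ ∧ ‖x‖ < 1 := by
  have hinner : ⟪x - a • e, e⟫ = ⟪x, e⟫ - a := by
    rw [inner_sub_left, real_inner_smul_left, real_inner_self_eq_norm_sq, he]; ring
  rw [hinner, abs_lt] at hslab
  refine ⟨by linarith [hslab.1], ?_⟩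
  have hexpand : ‖x‖ ^ 2 = ‖x - a • e‖ ^ 2 + 2 * a * (⟪x, e⟫ - a) + a ^ 2 := by
    conv_lhs => rw [← sub_add_cancel x (a • e)]
    rw [norm_add_sq_real, real_inner_smul_right, hinner, norm_smul, he, Real.norm_eq_abs,
      mul_one, sq_abs]
    ring
  have ha := a_mem_Ioo.1
  have hsq : ‖x‖ ^ 2 < 1 := by
    nlinarith [three_mul_a_sq_sub_a, norm_nonneg (x - a • e),
      mul_lt_mul_of_pos_left hslab.2 (by linarith : (0 : ℝ) < 2 * a)]
  nlinarith [norm_nonneg x]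

end Slab

section Euclidean

variable {n : ℕ}

theorem isOpen_T (hn : 0 < n) : IsOpen (T n hn) := by
  simp only [T, Set.ofPred_and]
  exact (isOpen_lt continuous_const (by fun_prop)).inter
    ((isOpen_lt (by fun_prop) continuous_const).inter (isOpen_lt (by fun_prop) continuous_const))

theorem volume_T_ne_top (hn : 0 < n) : volume (T n hn) ≠ ⊤ :=
  measure_ne_top_of_subset (fun _ hx ↦ mem_ball_zero_iff.2 hx.2.2) measure_ball_lt_top.ne

theorem ball_inter_slab_subset_T (hn : 0 < n) :
    ball (a • EuclideanSpace.single (⟨0, hn⟩ : Fin n) (1 : ℝ)) (1 / 2) ∩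
      {x | |⟪x - a • EuclideanSpace.single (⟨0, hn⟩ : Fin n) (1 : ℝ),
        EuclideanSpace.single (⟨0, hn⟩ : Fin n) (1 : ℝ)⟫| < a - 1 / 2} ⊆ T n hn := by
  rintro x ⟨hx, hslab⟩
  rw [mem_ball_iff_norm] at hx
  obtain ⟨hcoord, hnorm⟩ := half_lt_inner_and_norm_lt_one (by simp) hx hslab
  rw [EuclideanSpace.inner_single_right, one_mul] at hcoord
  exact ⟨hcoord, hx, hnorm⟩

theorem volume_real_ball_eq_pow_mul (hn : 0 < n) (x : EuclideanSpace ℝ (Fin n)) {r : ℝ}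
    (hr : 0 ≤ r) :
    volume.real (ball x r) = r ^ n * volume.real (ball (0 : EuclideanSpace ℝ (Fin n)) 1) := by
  have : Nonempty (Fin n) := ⟨⟨0, hn⟩⟩
  rw [← Measure.addHaar_real_closedBall_eq_addHaar_real_ball,
    Measure.addHaar_real_closedBall _ _ hr, finrank_euclideanSpace_fin]

theorem half_pow_mul_le_volume_real_T (hn : 0 < n) :
    (1 / 2) ^ n * volume.real (ball (0 : EuclideanSpace ℝ (Fin n)) 1) ≤
      volume.real (T n hn) + √((1 / 2) ^ 2 - (a - 1 / 2) ^ 2) ^ n *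
        volume.real (ball (0 : EuclideanSpace ℝ (Fin n)) 1) := by
  set e := EuclideanSpace.single (⟨0, hn⟩ : Fin n) (1 : ℝ)
  have h := measure_ball_le_measure_slab_add_measure_ball volume (e := e) (by simp [e]) (a • e)
    (1 / 2) (t := a - 1 / 2) (by linarith [a_mem_Ioo.1])
  have hslab : volume (ball (a • e) (1 / 2) ∩ {x | |⟪x - a • e, e⟫| < a - 1 / 2}) ≠ ⊤ :=
    measure_ne_top_of_subset Set.inter_subset_left measure_ball_lt_top.ne
  have hreal := ENNReal.toReal_mono (ENNReal.add_ne_top.2 ⟨hslab, measure_ball_lt_top.ne⟩) h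
  rw [ENNReal.toReal_add hslab measure_ball_lt_top.ne] at hreal
  change volume.real _ ≤ volume.real _ + volume.real _ at hreal
  rw [volume_real_ball_eq_pow_mul hn _ (by norm_num),
    volume_real_ball_eq_pow_mul hn _ (Real.sqrt_nonneg _)] at hreal
  linarith [measureReal_mono (ball_inter_slab_subset_T hn) (volume_T_ne_top hn)]

theorem volume_real_T_union_neg (hn : 0 < n) :
    volume.real (T n hn ∪ -T n hn) = 2 * volume.real (T n hn) := by
  have hdisj : Disjoint (T n hn) (-T n hn) := by
    refine Set.disjoint_left.2 fun x hx hx' ↦ ?_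
    have h₁ : (1 / 2 : ℝ) < x ⟨0, hn⟩ := hx.1
    have h₂ : (1 / 2 : ℝ) < -x ⟨0, hn⟩ := hx'.1
    linarith
  have hneg : volume (-T n hn) = volume (T n hn) := Measure.measure_neg volume _
  rw [measureReal_union hdisj (isOpen_T hn).measurableSet.neg (volume_T_ne_top hn)
    (hneg ▸ volume_T_ne_top hn), measureReal_def, measureReal_def, hneg, two_mul]

theorem two_mul_pow_lt_half_pow (hn : 14 ≤ n) :
    2 * √((1 / 2) ^ 2 - (a - 1 / 2) ^ 2) ^ n < (1 / 2) ^ n := by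
  set ρ := √((1 / 2) ^ 2 - (a - 1 / 2) ^ 2)
  have hρ : (2 * ρ) ^ 2 = 8 * a / 3 - 1 := by
    rw [mul_pow, Real.sq_sqrt (by nlinarith [a_mem_Ioo.1, a_mem_Ioo.2])]
    nlinarith [three_mul_a_sq_sub_a]
  have hle : (2 * ρ) ^ 2 ≤ 0.85 := by rw [hρ]; linarith [a_mem_Ioo.2]
  have hle_one : 2 * ρ ≤ 1 := by nlinarith [Real.sqrt_nonneg ((1 / 2) ^ 2 - (a - 1 / 2) ^ 2)]
  have hpow : (2 * ρ) ^ n < 1 / 2 :=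
    calc (2 * ρ) ^ n ≤ (2 * ρ) ^ 14 := pow_le_pow_of_le_one (by positivity) hle_one hn
      _ = ((2 * ρ) ^ 2) ^ 7 := by ring
      _ ≤ 0.85 ^ 7 := pow_le_pow_left₀ (by positivity) hle 7
      _ < 1 / 2 := by norm_num
  rw [mul_pow] at hpow
  have h2n : (0 : ℝ) < 2 ^ n := by positivity
  rw [div_pow, one_pow, lt_div_iff₀ h2n]
  nlinarith

end Euclidean

theorem stmt_13 (n : ℕ) (hn : 15 ≤ n) :
    (volume (T n (by omega) ∪ -(T n (by omega)))).toReal >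
      (1/2) ^ n * (volume (ball (0 : EuclideanSpace ℝ (Fin n)) 1)).toReal := by
  have hn₀ : 0 < n := by omega
  have hV : 0 < volume.real (ball (0 : EuclideanSpace ℝ (Fin n)) 1) :=
    ENNReal.toReal_pos (measure_ball_pos volume 0 one_pos).ne' measure_ball_lt_top.ne
  have hT := half_pow_mul_le_volume_real_T hn₀
  have hρ := mul_lt_mul_of_pos_right (two_mul_pow_lt_half_pow (n := n) (by omega)) hV
  change volume.real (T n hn₀ ∪ -T n hn₀) > (1 / 2) ^ n * volume.real _
  rw [volume_real_T_union_neg hn₀]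
  linarith
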